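/- With d_k = 2^k and m_k = min(k^{2n+5}, d_k^n), any nested Cantor-type set E = ⋂_k E_k, where E_k consists of m₁⋯m_k grid cubes of side 1/(d₁⋯d_k) with each level-k cube containing exactly m_{k+1} level-(k+1) cubes, has upper Minkowski dimension zero. -/

import Mathlib

open Set Filter MeasureTheory Metric Bornology
open scoped ENNReal NNReal Topology Pointwise

noncomputable def covN {X : Type*} [PseudoMetricSpace X] (E : Set X) (δ : ℝ) : ℕ :=
  sInf {k : ℕ | ∃ S : Finset X, S.card = k ∧ E ⊆ ⋃ x ∈ S, Metric.ball x δ}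

/-- Upper Minkowski (box) dimension. -/
noncomputable def ubDim {X : Type*} [PseudoMetricSpace X] (E : Set X) : ℝ≥0∞ :=
  ENNReal.ofReal
    (Filter.limsup (fun δ : ℝ => Real.log (covN E δ) / Real.log (1 / δ)) (𝓝[>] (0:ℝ)))

/-- Packing dimension, via countable covers by bounded sets. -/
noncomputable def packDim {X : Type*} [PseudoMetricSpace X] (E : Set X) : ℝ≥0∞ :=
  ⨅ (F : ℕ → Set X) (_ : E ⊆ ⋃ i, F i) (_ : ∀ i, Bornology.IsBounded (F i)),
    ⨆ i, ubDim (F i)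

/-- Grid cube of level `k`: side length `1/(d₁⋯d_k)` (where `Dk = d₁⋯d_k`), lower corner `j/Dk`. -/
def gridCube (n : ℕ) (Dk : ℕ) (j : Fin n → ℕ) : Set (EuclideanSpace ℝ (Fin n)) :=
  {x | ∀ i, x i ∈ Set.Icc ((j i : ℝ) / Dk) (((j i : ℝ) + 1) / Dk)}

/-- Covering bound: if `E` is covered by `J.card` grid cubes of side `1/Dk`, then any
`δ ≥ n / Dk` admits a `δ`-ball cover with at most `J.card` balls. -/
lemma covN_le_card_aux (n : ℕ) (hn : 0 < n) (Dk : ℕ) (hD : 0 < Dk)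
    (J : Finset (Fin n → ℕ)) (E : Set (EuclideanSpace ℝ (Fin n)))
    (hE : E ⊆ ⋃ j ∈ J, gridCube n Dk j) (δ : ℝ) (hδ : (n : ℝ) / Dk ≤ δ) :
    covN E δ ≤ J.card := by
  classical
  have hD' : (0:ℝ) < Dk := by exact_mod_cast hD
  have hn' : (1:ℝ) ≤ n := by exact_mod_cast hn
  set c : (Fin n → ℕ) → EuclideanSpace ℝ (Fin n) :=
    fun j => WithLp.toLp 2 (fun i => ((j i : ℝ) + 2⁻¹) / Dk) with hc
  have hcover : E ⊆ ⋃ x ∈ J.image c, Metric.ball x δ := by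
    intro x hx
    have hx' := hE hx
    simp only [Set.mem_iUnion, exists_prop] at hx'
    obtain ⟨j, hj, hxj⟩ := hx'
    refine Set.mem_iUnion₂.2 ⟨c j, Finset.mem_image_of_mem c hj, ?_⟩
    rw [Metric.mem_ball]
    have hb : ∀ i, dist (x i) (c j i) ≤ 2⁻¹ / Dk := by
      intro i
      have h1 : ((j i : ℝ)) / Dk ≤ x i := (hxj i).1
      have h2 : x i ≤ ((j i : ℝ) + 1) / Dk := (hxj i).2
      have e1 : ((j i:ℝ) + 2⁻¹) / Dk - 2⁻¹ / Dk = (j i : ℝ) / Dk := by ring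
      have e2 : ((j i:ℝ) + 2⁻¹) / Dk + 2⁻¹ / Dk = ((j i : ℝ) + 1) / Dk := by ring
      have hcji : c j i = ((j i:ℝ) + 2⁻¹) / Dk := rfl
      rw [Real.dist_eq, abs_le, hcji]
      constructor <;> linarith
    have hdist : dist x (c j) ≤ (n:ℝ) * (2⁻¹ / Dk) := by
      rw [EuclideanSpace.dist_eq]
      have hsum : (∑ i, dist (x i) (c j i) ^ 2) ≤ (n:ℝ) * (2⁻¹ / Dk) ^ 2 := by
        calc (∑ i, dist (x i) (c j i) ^ 2) ≤ ∑ _i : Fin n, (2⁻¹ / (Dk:ℝ)) ^ 2 :=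
              Finset.sum_le_sum fun i _ => pow_le_pow_left₀ dist_nonneg (hb i) 2
          _ = (n:ℝ) * (2⁻¹ / Dk) ^ 2 := by
              simp [Finset.sum_const, Finset.card_univ, nsmul_eq_mul]
      have hq : (0:ℝ) ≤ 2⁻¹ / (Dk:ℝ) := by positivity
      calc Real.sqrt (∑ i, dist (x i) (c j i) ^ 2)
          ≤ Real.sqrt ((n:ℝ) * (2⁻¹ / Dk) ^ 2) := Real.sqrt_le_sqrt hsum
        _ ≤ Real.sqrt (((n:ℝ) * (2⁻¹ / Dk)) ^ 2) := by
            apply Real.sqrt_le_sqrt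
            have hs : (0:ℝ) ≤ (2⁻¹ / (Dk:ℝ)) ^ 2 := by positivity
            nlinarith
        _ = (n:ℝ) * (2⁻¹ / Dk) := Real.sqrt_sq (by positivity)
    have hx0 : (0:ℝ) < (n:ℝ) / Dk := by positivity
    have hlt : (n:ℝ) * (2⁻¹ / Dk) < (n:ℝ) / Dk := by
      have he : (n:ℝ) * (2⁻¹ / Dk) = ((n:ℝ) / Dk) * 2⁻¹ := by ring
      rw [he]; linarith
    calc dist x (c j) ≤ (n:ℝ) * (2⁻¹ / Dk) := hdist
      _ < (n:ℝ) / Dk := hlt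
      _ ≤ δ := hδ
  have hmem : (J.image c).card ∈
      {k : ℕ | ∃ S : Finset (EuclideanSpace ℝ (Fin n)), S.card = k ∧
        E ⊆ ⋃ x ∈ S, Metric.ball x δ} := ⟨J.image c, rfl, hcover⟩
  exact (Nat.sInf_le hmem).trans Finset.card_image_le

lemma two_mul_sum_range (k : ℕ) : 2 * ∑ l ∈ Finset.range k, (l + 1) = k * (k + 1) := by
  induction k with
  | zero => simp
  | succ k ih => rw [Finset.sum_range_succ, Nat.mul_add, ih]; ring

lemma eventually_poly_log (C c ε : ℝ) (hε : 0 < ε) :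
    ∀ᶠ k : ℕ in atTop, C * ((k:ℝ)+1) * Real.log ((k:ℝ)+1) + c ≤ ε * (k:ℝ)^2 := by
  have h1 : Tendsto (fun x : ℝ => Real.log x / x) atTop (𝓝 0) :=
    Real.isLittleO_log_id_atTop.tendsto_div_nhds_zero
  have h2 : Tendsto (fun k : ℕ => (k:ℝ) + 1) atTop atTop :=
    tendsto_atTop_add_const_right _ 1 tendsto_natCast_atTop_atTop
  have h3 : Tendsto (fun k : ℕ => Real.log ((k:ℝ)+1) / ((k:ℝ)+1)) atTop (𝓝 0) := h1.comp h2
  have h4 : Tendsto (fun k : ℕ => (1 + 1/(k:ℝ))^2) atTop (𝓝 1) := by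
    have := (tendsto_const_nhds (x := (1:ℝ)) (f := (atTop : Filter ℕ))).add
      tendsto_one_div_atTop_nhds_zero_nat
    simpa using this.pow 2
  have h5 : Tendsto (fun k : ℕ => c / (k:ℝ)^2) atTop (𝓝 0) := by
    apply Tendsto.div_atTop (tendsto_const_nhds)
    exact (tendsto_pow_atTop (two_ne_zero)).comp tendsto_natCast_atTop_atTop
  have h6 : Tendsto (fun k : ℕ =>
      C * (Real.log ((k:ℝ)+1) / ((k:ℝ)+1) * (1 + 1/(k:ℝ))^2) + c / (k:ℝ)^2)
      atTop (𝓝 0) := by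
    have := ((h3.mul h4).const_mul C).add h5
    simpa using this
  have h7 : Tendsto (fun k : ℕ =>
      (C * ((k:ℝ)+1) * Real.log ((k:ℝ)+1) + c) / (k:ℝ)^2) atTop (𝓝 0) := by
    refine Filter.Tendsto.congr' ?_ h6
    filter_upwards [eventually_ge_atTop 1] with k hk
    have hk0 : (k:ℝ) ≠ 0 := by
      have : (1:ℝ) ≤ (k:ℝ) := by exact_mod_cast hk
      linarith
    have hk1 : (k:ℝ) + 1 ≠ 0 := by positivity
    field_simp
  filter_upwards [h7.eventually_lt_const hε, eventually_ge_atTop 1] with k hk hk1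
  have hk2 : (0:ℝ) < (k:ℝ)^2 := by
    have : (1:ℝ) ≤ (k:ℝ) := by exact_mod_cast hk1
    positivity
  exact le_of_lt ((div_lt_iff₀ hk2).1 hk)

/-- With `d_k = 2^k` and `m_k = min(k^(2n+5), d_k^n)`, any nested Cantor-type set of this
branching structure has upper Minkowski dimension zero. -/
theorem stmt19 (n : ℕ) (hn : 0 < n) (d m : ℕ → ℕ)
    (hd : ∀ k, d k = 2 ^ k) (hm : ∀ k, m k = min (k ^ (2 * n + 5)) (d k ^ n))
    (J : ℕ → Finset (Fin n → ℕ))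
    (hJrange : ∀ k, ∀ j ∈ J k, ∀ i, j i < ∏ l ∈ Finset.range k, d (l + 1))
    (hJcard : ∀ k, (J k).card = ∏ l ∈ Finset.range k, m (l + 1))
    (hnest : ∀ k, ∀ j' ∈ J (k + 1), ∃ j ∈ J k,
      gridCube n (∏ l ∈ Finset.range (k + 1), d (l + 1)) j' ⊆
        gridCube n (∏ l ∈ Finset.range k, d (l + 1)) j)
    (hchild : ∀ k, ∀ j ∈ J k,
      {j' ∈ (J (k + 1) : Set (Fin n → ℕ)) |
        gridCube n (∏ l ∈ Finset.range (k + 1), d (l + 1)) j' ⊆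
          gridCube n (∏ l ∈ Finset.range k, d (l + 1)) j}.ncard = m (k + 1)) :
    ubDim (⋂ k, ⋃ j ∈ J k, gridCube n (∏ l ∈ Finset.range k, d (l + 1)) j) = 0 := by
  classical
  set E : Set (EuclideanSpace ℝ (Fin n)) :=
    ⋂ k, ⋃ j ∈ J k, gridCube n (∏ l ∈ Finset.range k, d (l + 1)) j with hEdef
  set D : ℕ → ℕ := fun k => ∏ l ∈ Finset.range k, d (l + 1) with hDdef
  set M : ℕ → ℕ := fun k => ∏ l ∈ Finset.range k, m (l + 1) with hMdef
  set S : ℕ → ℕ := fun k => ∑ l ∈ Finset.range k, (l + 1) with hSdef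
  have hnR : (0:ℝ) < (n:ℝ) := by exact_mod_cast hn
  have hDpow : ∀ k, D k = 2 ^ S k := by
    intro k
    simp only [hDdef, hSdef]
    rw [← Finset.prod_pow_eq_pow_sum]
    exact Finset.prod_congr rfl fun l _ => hd (l + 1)
  have hSk : ∀ k, k ≤ S k := by
    intro k
    calc k = ∑ _l ∈ Finset.range k, 1 := by simp
      _ ≤ S k := Finset.sum_le_sum fun l _ => by omega
  have hDpos : ∀ k, 0 < D k := fun k => by rw [hDpow]; positivity
  have hDge : ∀ k, 2 ^ k ≤ D k := fun k => by
    rw [hDpow]; exact Nat.pow_le_pow_right (by norm_num) (hSk k)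
  have hDmono : ∀ j k, j ≤ k → D j ≤ D k := by
    intro j k hjk
    rw [hDpow, hDpow]
    refine Nat.pow_le_pow_right (by norm_num) ?_
    simp only [hSdef]
    exact Finset.sum_le_sum_of_subset (Finset.range_subset_range.2 hjk)
  have hMpos : ∀ k, 0 < M k := by
    intro k
    refine Finset.prod_pos fun l _ => ?_
    rw [hm]
    refine lt_min (pow_pos (by omega) _) ?_
    rw [hd]; positivity
  have hMub : ∀ k, M (k + 1) ≤ (k + 1) ^ ((2 * n + 5) * (k + 1)) := by
    intro k
    have h1 : M (k + 1) ≤ ((k + 1) ^ (2 * n + 5)) ^ (Finset.range (k + 1)).card := by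
      refine Finset.prod_le_pow_card _ _ _ fun l hl => ?_
      rw [hm]
      refine le_trans (min_le_left _ _) ?_
      exact Nat.pow_le_pow_left (by have := Finset.mem_range.1 hl; omega) _
    simpa [Finset.card_range, ← pow_mul] using h1
  have hcov : ∀ k (δ : ℝ), (n : ℝ) / D k ≤ δ → covN E δ ≤ M k := by
    intro k δ hδ
    have hsub : E ⊆ ⋃ j ∈ J k, gridCube n (D k) j := by
      rw [hEdef]
      exact Set.iInter_subset _ k
    calc covN E δ ≤ (J k).card := covN_le_card_aux n hn (D k) (hDpos k) (J k) E hsub δ hδ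
      _ = M k := hJcard k
  have hgoal : Filter.limsup (fun δ : ℝ => Real.log (covN E δ) / Real.log (1 / δ))
      (𝓝[>] (0:ℝ)) ≤ 0 := by
    set f : ℝ → ℝ := fun δ => Real.log (covN E δ) / Real.log (1 / δ) with hfdef
    have hf0 : ∀ᶠ δ in 𝓝[>] (0:ℝ), 0 ≤ f δ := by
      filter_upwards [Ioo_mem_nhdsGT_of_mem (show (0:ℝ) ∈ Set.Ico (0:ℝ) 1 from ⟨le_refl 0, one_pos⟩)]
        with δ hδ
      refine div_nonneg (Real.log_natCast_nonneg _) ?_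
      exact Real.log_nonneg (one_le_one_div hδ.1 hδ.2.le)
    have hev : ∀ ε : ℝ, 0 < ε → ∀ᶠ δ in 𝓝[>] (0:ℝ), f δ ≤ ε := by
      intro ε hε
      have hlog2 : (0:ℝ) < Real.log 2 := Real.log_pos one_lt_two
      obtain ⟨K, hK⟩ := eventually_atTop.1
        (eventually_poly_log ((2 * n + 5 : ℕ) : ℝ) (ε * Real.log n)
          (ε * Real.log 2 / 2) (by positivity))
      have hDKR : (0:ℝ) < (D K : ℝ) := by exact_mod_cast hDpos K
      have hδ₁pos : (0:ℝ) < min ((n:ℝ) / D K) 1 := lt_min (by positivity) one_pos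
      filter_upwards [Ioo_mem_nhdsGT_of_mem (show (0:ℝ) ∈ Set.Ico (0:ℝ) (min ((n:ℝ) / D K) 1) from ⟨le_refl 0, hδ₁pos⟩)]
        with δ hδmem
      obtain ⟨hδ0, hδlt⟩ := hδmem
      have hδ1 : δ < 1 := lt_of_lt_of_le hδlt (min_le_right _ _)
      have hδK : δ < (n:ℝ) / D K := lt_of_lt_of_le hδlt (min_le_left _ _)
      have hex : ∃ k, (n:ℝ) / D k ≤ δ := by
        obtain ⟨k, hk⟩ := exists_nat_gt ((n:ℝ) / δ)
        refine ⟨k, ?_⟩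
        have h2k : (k:ℝ) ≤ (D k : ℝ) := by
          exact_mod_cast le_trans (Nat.lt_two_pow_self (n := k)).le (hDge k)
        have hDk0 : (0:ℝ) < (D k : ℝ) := by exact_mod_cast hDpos k
        rw [div_le_iff₀ hDk0]
        have hlt : (n:ℝ) / δ < (D k : ℝ) := lt_of_lt_of_le hk h2k
        calc (n:ℝ) = (n:ℝ) / δ * δ := by field_simp
          _ ≤ δ * (D k : ℝ) := by
              rw [mul_comm ((n:ℝ)/δ) δ]
              exact mul_le_mul_of_nonneg_left hlt.le hδ0.le
      have hfindK : K < Nat.find hex := by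
        by_contra h
        push_neg at h
        have hmono : (n:ℝ) / D K ≤ (n:ℝ) / D (Nat.find hex) := by
          have hD1 : (0:ℝ) < (D (Nat.find hex) : ℝ) := by exact_mod_cast hDpos _
          apply div_le_div_of_nonneg_left hnR.le hD1
          exact_mod_cast hDmono _ _ h
        exact absurd (hmono.trans (Nat.find_spec hex)) (not_le.2 hδK)
      obtain ⟨k, hkeq⟩ : ∃ k, Nat.find hex = k + 1 := ⟨Nat.find hex - 1, by omega⟩
      have hkK : K ≤ k := by omega
      have hcovle : covN E δ ≤ M (k + 1) :=
        hcov (k + 1) δ (by rw [← hkeq]; exact Nat.find_spec hex)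
      have hklt : δ < (n:ℝ) / D k := not_le.1 (Nat.find_min hex (by omega))
      have hDkR : (0:ℝ) < (D k : ℝ) := by exact_mod_cast hDpos k
      have hlogδpos : 0 < Real.log (1 / δ) :=
        Real.log_pos (one_lt_one_div hδ0 hδ1)
      have hfrac_pos : (0:ℝ) < (D k : ℝ) / n := by positivity
      have hfrac_le : (D k : ℝ) / n ≤ 1 / δ := by
        rw [div_le_div_iff₀ hnR hδ0]
        have h' : δ * (D k : ℝ) < n := (lt_div_iff₀ hDkR).1 hklt
        nlinarith
      have hlogδ : Real.log ((D k : ℝ) / n) ≤ Real.log (1 / δ) :=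
        Real.log_le_log hfrac_pos hfrac_le
      have hlogcov : Real.log (covN E δ) ≤ Real.log (M (k + 1)) := by
        rcases Nat.eq_zero_or_pos (covN E δ) with h0 | hpos
        · rw [h0]; simpa using Real.log_natCast_nonneg (M (k + 1))
        · exact Real.log_le_log (by exact_mod_cast hpos) (by exact_mod_cast hcovle)
      have hlogM : Real.log (M (k + 1)) ≤
          ((2 * n + 5 : ℕ) : ℝ) * ((k:ℝ) + 1) * Real.log ((k:ℝ) + 1) := by
        have h1 : (M (k + 1) : ℝ) ≤ ((k + 1 : ℕ) : ℝ) ^ ((2 * n + 5) * (k + 1)) := by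
          exact_mod_cast hMub k
        have h2 := Real.log_le_log (by exact_mod_cast hMpos (k + 1)) h1
        rw [Real.log_pow] at h2
        calc Real.log (M (k + 1))
            ≤ (((2 * n + 5) * (k + 1) : ℕ) : ℝ) * Real.log ((k + 1 : ℕ) : ℝ) := h2
          _ = ((2 * n + 5 : ℕ) : ℝ) * ((k:ℝ) + 1) * Real.log ((k:ℝ) + 1) := by
              push_cast; ring
      have hSreal : ((k:ℝ))^2 ≤ 2 * (S k : ℝ) := by
        have h0 : 2 * S k = k * (k + 1) := by
          simp only [hSdef]; exact two_mul_sum_range k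
        have h' : (2:ℝ) * (S k : ℝ) = (k:ℝ) * ((k:ℝ) + 1) := by exact_mod_cast h0
        nlinarith [Nat.cast_nonneg (α := ℝ) k]
      have hTk : ((2 * n + 5 : ℕ) : ℝ) * ((k:ℝ) + 1) * Real.log ((k:ℝ) + 1) ≤
          ε * Real.log ((D k : ℝ) / n) := by
        have hlogD : Real.log ((D k : ℝ) / n) = (S k : ℝ) * Real.log 2 - Real.log n := by
          rw [Real.log_div (ne_of_gt hDkR) (ne_of_gt hnR)]
          congr 1
          have hDc : (D k : ℝ) = (2:ℝ) ^ (S k) := by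
            rw [hDpow k]; push_cast; ring
          rw [hDc, Real.log_pow]
        rw [hlogD]
        have hKk := hK k hkK
        nlinarith [mul_le_mul_of_nonneg_left hSreal
          (by positivity : (0:ℝ) ≤ ε * Real.log 2)]
      show f δ ≤ ε
      simp only [hfdef]
      rw [div_le_iff₀ hlogδpos]
      calc Real.log (covN E δ) ≤ Real.log (M (k + 1)) := hlogcov
        _ ≤ ((2 * n + 5 : ℕ) : ℝ) * ((k:ℝ) + 1) * Real.log ((k:ℝ) + 1) := hlogM
        _ ≤ ε * Real.log ((D k : ℝ) / n) := hTk
        _ ≤ ε * Real.log (1 / δ) := mul_le_mul_of_nonneg_left hlogδ hε.le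
    have hcob : IsCoboundedUnder (· ≤ ·) (𝓝[>] (0:ℝ)) f :=
      isCoboundedUnder_le_of_eventually_le _ hf0
    refine le_of_forall_pos_le_add fun ε hε => ?_
    have := limsup_le_of_le hcob (hev ε hε)
    simpa using this
  show ubDim E = 0
  unfold ubDim
  exact ENNReal.ofReal_eq_zero.2 hgoal
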